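/- arXiv:1312.2752 — 9 statements merged into one kernel-verified Lean document; each statement's English description precedes it below -/
import Mathlib

section
/- Let A be an m-th order n-dimensional circulant tensor with row tensors A_k (k ∈ [n]) and let P be the cyclic permutation matrix with P_{j,j+1}=1 for j∈[n-1], P_{n,1}=1 and zeros elsewhere. Then for all k ∈ [n], A_{k+1} = A_k P^{m-1} (with A_{n+1} := A_1), where (A_k P^{m-1})_{j_1...j_{m-1}} = Σ_{i_1,...,i_{m-1}} (A_k)_{i_1...i_{m-1}} P_{i_1 j_1}··· P_{i_{m-1} j_{m-1}}. -/
/-! Contracting each of the last `m` slots with `P` keeps only the term `i = j - 1`, so `A_k P^m`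
is the row tensor `A_k` evaluated at `j - 1`; shifting all indices by one, circulance turns this
into `A_{k+1}` at `j`. -/

theorem Fintype.sum_mul_prod_permMatrix {ι α R : Type*} [Fintype ι] [DecidableEq ι] [Fintype α]
    [DecidableEq α] [CommSemiring R] (e : α ≃ α) (P : α → α → R)
    (hP : ∀ a b, P a b = if b = e a then 1 else 0) (f : (ι → α) → R) (j : ι → α) :
    ∑ i : ι → α, f i * ∏ l, P (i l) (j l) = f (e.symm ∘ j) := by
  have hperm (i : ι → α) : (∀ l, j l = e (i l)) ↔ i = e.symm ∘ j := by
    simp only [funext_iff, Function.comp_apply, Equiv.eq_symm_apply, eq_comm]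
  simp only [hP, Fintype.prod_boole, hperm, mul_ite, mul_one, mul_zero]
  exact Fintype.sum_ite_eq' _ _

theorem circulant_apply_cons_succ {m n : ℕ} [NeZero n] {R : Type*} (A : (Fin (m + 1) → Fin n) → R)
    (hA : ∀ j : Fin (m + 1) → Fin n, A j = A (fun l => j l + 1)) (k : Fin n) (j : Fin m → Fin n) :
    A (Fin.cons (k + 1) j) = A (Fin.cons k (fun l => j l - 1)) := by
  rw [hA (Fin.cons k _)]
  congr 1
  funext l
  refine Fin.cases ?_ (fun _ => ?_) l <;> simp

/-- For a circulant tensor `A` of order `m+1` and dimension `n`, with row tensors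
`A_k = (a_{k j_1 ... j_m})` and `P` the cyclic permutation matrix, we have
`A_{k+1} = A_k P^m` (indices mod `n`). -/
theorem stmt_1 (m n : ℕ) [NeZero n] (A : (Fin (m + 1) → Fin n) → ℝ)
    (hA : ∀ j : Fin (m + 1) → Fin n, A j = A (fun l => j l + 1))
    (P : Fin n → Fin n → ℝ) (hP : ∀ a b : Fin n, P a b = if b = a + 1 then 1 else 0)
    (k : Fin n) (j : Fin m → Fin n) :
    A (Fin.cons (k + 1) j) = ∑ i : Fin m → Fin n, A (Fin.cons k i) * ∏ l, P (i l) (j l) := by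
  rw [Fintype.sum_mul_prod_permMatrix (Equiv.addRight 1) P hP]
  simpa [sub_eq_add_neg, Function.comp_def] using circulant_apply_cons_succ A hA k j
end

section
/- Let A be an m-th order n-dimensional real tensor and P the cyclic permutation matrix (P_{j,j+1}=1 for j∈[n-1], P_{n,1}=1, zeros elsewhere). Then the following are equivalent: (a) A is circulant; (b) A P^m = A; (c) for every n×n circulant matrix C, the tensor A C^m is circulant. -/
/-!
`A Pᵐ` is `A` with all indices shifted by `-1`, which gives (a) ⇔ (b). For (a) ⇒ (c), reindex the
sum defining `A Cᵐ` by the shift `j ↦ j + 1`, under which both `A` and `C` are invariant; and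
(c) ⇒ (b) is the special case `C = P`.
-/

open BigOperators

section ShiftedTensorProduct

variable {σ ι R : Type*} [Fintype σ] [DecidableEq σ] [AddGroup ι] [Fintype ι]
  [CommSemiring R]

/-- Only `j = k - c` contributes: every other `j` meets a zero entry of the shift matrix. -/
theorem sum_mul_prod_shiftMatrix [DecidableEq ι] (A : (σ → ι) → R) (c : ι) (k : σ → ι) :
    ∑ j : σ → ι, A j * ∏ l, (if k l = j l + c then 1 else 0 : R) = A (fun l => k l - c) := by
  rw [Fintype.sum_eq_single (fun l => k l - c)]
  · simp
  · intro j hj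
    obtain ⟨l, hl⟩ := Function.ne_iff.mp hj
    have hzero : (if k l = j l + c then 1 else 0 : R) = 0 :=
      if_neg fun h => hl (eq_sub_of_add_eq h.symm)
    rw [Finset.prod_eq_zero (Finset.mem_univ l) hzero, mul_zero]

theorem sum_mul_prod_eq_sum_mul_prod_add_of_shift_invariant (A : (σ → ι) → R)
    (C : ι → ι → R) (c : ι) (hA : ∀ j, A j = A (fun l => j l + c))
    (hC : ∀ a b, C a b = C (a + c) (b + c)) (k : σ → ι) :
    ∑ j : σ → ι, A j * ∏ l, C (j l) (k l) = ∑ j : σ → ι, A j * ∏ l, C (j l) (k l + c) := by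
  refine Fintype.sum_equiv (Equiv.piCongrRight fun _ => Equiv.addRight c) _ _ fun j => ?_
  change _ = A (fun l => j l + c) * ∏ l, C (j l + c) (k l + c)
  rw [← hA j]
  exact congrArg (A j * ·) (Finset.prod_congr rfl fun l _ => hC (j l) (k l))

end ShiftedTensorProduct

/-- For `A ∈ T_{m,n}` and the cyclic permutation matrix `P`, the following are equivalent:
(a) `A` is circulant; (b) `A Pᵐ = A`; (c) for every circulant matrix `C`,
the tensor `A Cᵐ` is circulant. -/
theorem stmt_2 (m n : ℕ) [NeZero n] (A : (Fin m → Fin n) → ℝ)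
    (P : Fin n → Fin n → ℝ) (hP : ∀ a b : Fin n, P a b = if b = a + 1 then 1 else 0) :
    List.TFAE
      [(∀ j : Fin m → Fin n, A j = A (fun l => j l + 1)),
       (∀ k : Fin m → Fin n, (∑ j : Fin m → Fin n, A j * ∏ l, P (j l) (k l)) = A k),
       (∀ C : Fin n → Fin n → ℝ, (∀ a b : Fin n, C a b = C (a + 1) (b + 1)) →
          ∀ k : Fin m → Fin n,
            (∑ j : Fin m → Fin n, A j * ∏ l, C (j l) (k l))
              = ∑ j : Fin m → Fin n, A j * ∏ l, C (j l) (k l + 1))] := by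
  obtain rfl : P = fun a b => if b = a + 1 then 1 else 0 := funext fun a => funext (hP a)
  have hAP := sum_mul_prod_shiftMatrix A (1 : Fin n)
  have hPcirc : ∀ a b : Fin n, (if b = a + 1 then 1 else 0 : ℝ) =
      if b + 1 = a + 1 + 1 then 1 else 0 := by
    simp
  tfae_have 1 → 3 := fun hA C hC =>
    sum_mul_prod_eq_sum_mul_prod_add_of_shift_invariant A C 1 hA hC
  tfae_have 3 → 2 := by
    intro hC k
    have h := hC _ hPcirc k
    simp only [hAP, add_sub_cancel_right] at h ⊢
    exact h
  tfae_have 2 → 1 := by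
    intro hAP' j
    have h := hAP' (fun l => j l + 1)
    simp only [hAP, add_sub_cancel_right] at h
    exact h
  tfae_finish
end

section
/- Let A be an m-th order n-dimensional circulant tensor with associated polynomial f_A. Then for each k with 0 ≤ k ≤ n−1, the vector v_k = (1, ω_k, ω_k², ..., ω_k^{n−1})ᵀ with ω_k = e^{2πik/n} is an eigenvector of A with eigenvalue λ_k = f_A(ω_k), i.e., A v_k^{m-1} = λ_k v_k^{[m-1]}. -/
/-!
Translating every index of a circulant tensor by the same `c ∈ ℤ/n` does not change the entry.
Substituting `t ↦ t + j` in the `j`-th row therefore turns it into the first row, and since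
`ω ^ n = 1` the exponent map `a ↦ ω ^ a` is additive on `ℤ/n`, so the substitution only
contributes the factor `(ω ^ j) ^ m`.
-/

open Finset

section Circulant

variable {ι α : Type*} {n : ℕ} [NeZero n] {A : (ι → Fin n) → α}

theorem circulant_apply_add_nsmul_one (hA : ∀ j, A j = A (fun l => j l + 1))
    (j : ι → Fin n) (c : ℕ) : A (fun l => j l + c • 1) = A j := by
  induction c with
  | zero => simp
  | succ c ih => rw [← ih, hA (fun l => j l + c • 1)]; simp only [succ_nsmul, add_assoc]

open Fin.NatCast in
theorem circulant_apply_add_const (hA : ∀ j, A j = A (fun l => j l + 1))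
    (j : ι → Fin n) (c : Fin n) : A (fun l => j l + c) = A j := by
  simpa only [nsmul_one, Fin.cast_val_eq_self] using circulant_apply_add_nsmul_one hA j c.val

end Circulant

theorem pow_finVal_add {M : Type*} [Monoid M] {n : ℕ} {ω : M} (hω : ω ^ n = 1) (a b : Fin n) :
    ω ^ (a + b : Fin n).val = ω ^ a.val * ω ^ b.val := by
  rw [Fin.val_add, ← pow_add, ← pow_eq_pow_mod _ hω]

theorem circulant_sum_cons_mul_prod_pow {R : Type*} [CommSemiring R] {m n : ℕ} [NeZero n]
    {A : (Fin (m + 1) → Fin n) → R} (hA : ∀ j, A j = A (fun l => j l + 1))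
    {ω : R} (hω : ω ^ n = 1) (j : Fin n) :
    ∑ t : Fin m → Fin n, A (Fin.cons j t) * ∏ l, ω ^ (t l).val
      = (∑ t : Fin m → Fin n, A (Fin.cons 0 t) * ∏ l, ω ^ (t l).val) * (ω ^ j.val) ^ m := by
  rw [sum_mul, ← Equiv.sum_comp (Equiv.addRight fun _ => j)]
  refine sum_congr rfl fun t _ => ?_
  have hcons : (Fin.cons j (t + fun _ => j) : Fin (m + 1) → Fin n)
      = fun l => (Fin.cons 0 t : Fin (m + 1) → Fin n) l + j := by
    ext l; refine Fin.cases ?_ (fun i => ?_) l <;> simp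
  simp only [Equiv.coe_addRight, Pi.add_apply, pow_finVal_add hω, prod_mul_distrib,
    prod_const, card_univ, Fintype.card_fin, hcons, circulant_apply_add_const hA, mul_assoc]

theorem exp_two_pi_I_mul_div_pow_eq_one (k : ℕ) {n : ℕ} (hn : n ≠ 0) :
    Complex.exp (2 * Real.pi * Complex.I * k / n) ^ n = 1 := by
  rw [← Complex.exp_nat_mul, ← Complex.exp_nat_mul_two_pi_mul_I k]
  congr 1
  field_simp

/-- For a circulant tensor `A` of order `m+1`, the vectors `v_k = (1, ω_k, ..., ω_k^{n-1})`
with `ω_k = e^{2πik/n}` are eigenvectors of `A`, with eigenvalue `λ_k = f_A(ω_k)` where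
`f_A` is the associated polynomial: `A v_k^{m} = λ_k v_k^{[m]}`. -/
theorem stmt_3 (m n : ℕ) [NeZero n] (A : (Fin (m + 1) → Fin n) → ℝ)
    (hA : ∀ j : Fin (m + 1) → Fin n, A j = A (fun l => j l + 1)) (k : Fin n) :
    ∀ j : Fin n,
      (∑ t : Fin m → Fin n, (A (Fin.cons j t) : ℂ) *
          ∏ l, Complex.exp (2 * (Real.pi : ℂ) * Complex.I * (k : ℕ) / (n : ℕ)) ^ (t l : ℕ))
        = (∑ t : Fin m → Fin n, (A (Fin.cons 0 t) : ℂ) *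
              Complex.exp (2 * (Real.pi : ℂ) * Complex.I * (k : ℕ) / (n : ℕ)) ^ (∑ l, (t l : ℕ)))
            * (Complex.exp (2 * (Real.pi : ℂ) * Complex.I * (k : ℕ) / (n : ℕ)) ^ (j : ℕ)) ^ m := by
  intro j
  rw [circulant_sum_cons_mul_prod_pow (A := fun i => (A i : ℂ)) (fun i => congrArg _ (hA i))
    (exp_two_pi_I_mul_div_pow_eq_one k (NeZero.ne n)) j]
  simp only [prod_pow_eq_pow_sum]
end

section
/- Let n be even and A an m-th order n-dimensional circulant tensor with root tensor A_1 = (α_{j_1...j_{m-1}}). Then λ_{n/2}(A) = Σ_{j_1,...,j_{m-1}} α_{j_1...j_{m-1}} (−1)^{j_1+···+j_{m-1}−m+1} is an H-eigenvalue of A with H-eigenvector the alternating-sign vector (1,−1,1,−1,...)ᵀ ∈ ℝ^n. -/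
/-! For even `n`, `k ↦ (-1)^k` is well defined modulo `n`, so `x ↦ (-1)^x` is a character of
`Fin n`. Circulancy lets one move the first index of `A` to `0` by the shift `t ↦ t - j` of the
remaining indices; the character then splits off one factor `(-1)^j` per remaining index. -/

theorem Fin.neg_one_pow_val_add {R : Type*} [Monoid R] [HasDistribNeg R] {n : ℕ} (hn : Even n)
    (x y : Fin n) : (-1 : R) ^ ((x + y : Fin n) : ℕ) = (-1) ^ (x : ℕ) * (-1) ^ (y : ℕ) := by
  calc (-1 : R) ^ ((x + y : Fin n) : ℕ)
      = (-1) ^ (((x : ℕ) + y) % n + n * (((x : ℕ) + y) / n)) := by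
        rw [Fin.val_add, pow_add, pow_mul, hn.neg_one_pow, one_pow, mul_one]
    _ = (-1) ^ (x : ℕ) * (-1) ^ (y : ℕ) := by rw [Nat.mod_add_div, pow_add]

open Fin.NatCast in
theorem apply_add_of_apply_add_one {ι β : Type*} {n : ℕ} [NeZero n] {A : (ι → Fin n) → β}
    (hA : ∀ j, A j = A (fun l => j l + 1)) (j : ι → Fin n) (c : Fin n) :
    A j = A (fun l => j l + c) := by
  suffices h : ∀ k : ℕ, A j = A (fun l => j l + (k : Fin n)) by
    simpa only [Fin.cast_val_eq_self] using h c
  intro k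
  induction k with
  | zero => simp
  | succ k ih => simpa only [Nat.cast_succ, add_assoc] using ih.trans (hA _)

/-- If `n` is even, a circulant tensor `A` of order `m+1` has the H-eigenvalue
`λ_{n/2}(A) = ∑ α_{j_1...j_m} (−1)^{j_1+⋯+j_m−m}` (0-based exponents), with H-eigenvector
the alternating-sign vector `(1,−1,1,−1,...)ᵀ`. -/
theorem stmt_6 (m n : ℕ) [NeZero n] (hn : Even n) (A : (Fin (m + 1) → Fin n) → ℝ)
    (hA : ∀ j : Fin (m + 1) → Fin n, A j = A (fun l => j l + 1)) :
    ∀ j : Fin n,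
      ∑ t : Fin m → Fin n, A (Fin.cons j t) * ∏ l, (-1 : ℝ) ^ (t l : ℕ)
        = (∑ t : Fin m → Fin n, A (Fin.cons 0 t) * (-1 : ℝ) ^ (∑ l, (t l : ℕ)))
            * ((-1 : ℝ) ^ (j : ℕ)) ^ m := by
  intro j
  have shift_to_zero (t : Fin m → Fin n) :
      A (Fin.cons j t) = A (Fin.cons 0 (fun l => t l - j)) := by
    rw [apply_add_of_apply_add_one hA _ (-j)]
    congr 1
    funext l
    refine Fin.cases ?_ (fun l => ?_) l <;> simp [sub_eq_add_neg]
  let e : (Fin m → Fin n) ≃ (Fin m → Fin n) := Equiv.piCongrRight fun _ => Equiv.addRight j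
  calc ∑ t, A (Fin.cons j t) * ∏ l, (-1 : ℝ) ^ (t l : ℕ)
      = ∑ s, A (Fin.cons 0 s) * ∏ l, (-1 : ℝ) ^ ((s l + j : Fin n) : ℕ) := by
        rw [← e.sum_comp]
        simp [e, shift_to_zero]
    _ = ∑ s, A (Fin.cons 0 s) * (-1 : ℝ) ^ (∑ l, (s l : ℕ)) * ((-1 : ℝ) ^ (j : ℕ)) ^ m := by
        simp only [Fin.neg_one_pow_val_add hn, Finset.prod_mul_distrib, Finset.prod_const,
          Finset.card_univ, Fintype.card_fin, Finset.prod_pow_eq_pow_sum, mul_assoc]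
    _ = _ := by rw [Finset.sum_mul]
end

section
/- Suppose A ∈ C_{m,n} is circulant and both m and n are even. Then A is alternative if and only if its root tensor A_1 is alternative, and A is negatively alternative if and only if A_1 is negatively alternative. -/
open BigOperators

/-! A circulant tensor is constant along the diagonal shifts `j ↦ j + c`. Shifting an index by `c`
changes its index sum by `(m + 1) c` modulo `n`; as `m + 1` and `n` are even, the sign
`(-1) ^ ∑ j` is shift-invariant, so the alternating condition is too. Every index shifts to one
with first entry `0`, i.e. to an entry of the root tensor. -/

/-- A tensor `B` is alternative if `b_{j_1...j_m}(−1)^{j_1+⋯+j_m−m} ≥ 0` for all indices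
(0-based indices: sign exponent is the plain index sum). -/
def Alt {m n : ℕ} (B : (Fin m → Fin n) → ℝ) : Prop :=
  ∀ j : Fin m → Fin n, 0 ≤ B j * (-1 : ℝ) ^ (∑ l, (j l : ℕ))

theorem Fin.sum_val_add_const_mod_two {k n : ℕ} (hk : Even k) (hn : Even n)
    (j : Fin k → Fin n) (c : Fin n) :
    (∑ l, ((j l + c : Fin n) : ℕ)) % 2 = (∑ l, (j l : ℕ)) % 2 := by
  obtain ⟨r, rfl⟩ := hk.two_dvd
  rw [Finset.sum_nat_mod]
  simp_rw [Fin.val_add, Nat.mod_mod_of_dvd _ hn.two_dvd]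
  rw [← Finset.sum_nat_mod, Finset.sum_add_distrib, Finset.sum_const, Finset.card_univ,
    Fintype.card_fin, smul_eq_mul, mul_assoc, Nat.add_mul_mod_self_left]

theorem Fin.sum_val_cons_zero {m n : ℕ} [NeZero n] (t : Fin m → Fin n) :
    ∑ l, ((Fin.cons 0 t : Fin (m + 1) → Fin n) l : ℕ) = ∑ l, (t l : ℕ) := by
  simp [Fin.sum_univ_succ]

def IsCirculant {k n : ℕ} [NeZero n] {α : Type*} (A : (Fin k → Fin n) → α) : Prop :=
  ∀ j : Fin k → Fin n, A j = A (fun l => j l + 1)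

namespace IsCirculant

section

variable {k n : ℕ} [NeZero n] {α β : Type*} {A : (Fin k → Fin n) → α}

theorem comp (hA : IsCirculant A) (f : α → β) : IsCirculant (f ∘ A) :=
  fun j => congrArg f (hA j)

theorem apply_add_const (hA : IsCirculant A) (j : Fin k → Fin n) (c : Fin n) :
    A (fun l => j l + c) = A j := by
  obtain ⟨n, rfl⟩ := Nat.exists_eq_succ_of_ne_zero (NeZero.ne n)
  induction c using Fin.induction with
  | zero => simp
  | succ c ih => simp_rw [← Fin.coeSucc_eq_succ, ← add_assoc, ← hA (fun l => j l + _), ih]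

end

theorem mul_neg_one_pow_sum_add_const {k n : ℕ} [NeZero n] (hk : Even k) (hn : Even n)
    {A : (Fin k → Fin n) → ℝ} (hA : IsCirculant A) (j : Fin k → Fin n) (c : Fin n) :
    A (fun l => j l + c) * (-1 : ℝ) ^ (∑ l, ((j l + c : Fin n) : ℕ)) =
      A j * (-1 : ℝ) ^ (∑ l, (j l : ℕ)) := by
  rw [hA.apply_add_const, neg_one_pow_eq_pow_mod_two, Fin.sum_val_add_const_mod_two hk hn,
    ← neg_one_pow_eq_pow_mod_two]

theorem alt_iff_alt_root {m n : ℕ} [NeZero n] (hm : Even (m + 1)) (hn : Even n)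
    {A : (Fin (m + 1) → Fin n) → ℝ} (hA : IsCirculant A) :
    Alt A ↔ Alt fun t : Fin m → Fin n => A (Fin.cons 0 t) := by
  refine ⟨fun h t => by simpa only [Fin.sum_val_cons_zero] using h (Fin.cons 0 t), fun h j => ?_⟩
  set j' : Fin (m + 1) → Fin n := fun l => j l + -j 0
  have hj' : j' = Fin.cons 0 (Fin.tail j') :=
    (Fin.cons_self_tail j').symm.trans (congrArg (Fin.cons · _) (add_neg_cancel (j 0)))
  rw [← hA.mul_neg_one_pow_sum_add_const hm hn j (-j 0)]
  change 0 ≤ A j' * (-1 : ℝ) ^ ∑ l, (j' l : ℕ)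
  rw [hj', Fin.sum_val_cons_zero]
  exact h _

end IsCirculant

/-- If `A ∈ C_{m+1,n}` is circulant and both the order `m+1` and dimension `n` are even,
then `A` is alternative iff its root tensor is alternative, and `A` is negatively
alternative iff its root tensor is negatively alternative. -/
theorem stmt_9 (m n : ℕ) [NeZero n] (hm : Even (m + 1)) (hn : Even n)
    (A : (Fin (m + 1) → Fin n) → ℝ)
    (hA : ∀ j : Fin (m + 1) → Fin n, A j = A (fun l => j l + 1)) :
    (Alt A ↔ Alt fun t : Fin m → Fin n => A (Fin.cons 0 t)) ∧
    ((Alt fun j => -A j) ↔ Alt fun t : Fin m → Fin n => -A (Fin.cons 0 t)) :=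
  have hA : IsCirculant A := hA
  ⟨hA.alt_iff_alt_root hm hn, (hA.comp Neg.neg).alt_iff_alt_root hm hn⟩
end

section
/- The symmetrization of a Toeplitz tensor is a Toeplitz tensor, and the symmetrization of a circulant tensor is a circulant tensor. -/
open BigOperators

/-- The symmetrization of a tensor: the average of its entries over all permutations of
the indices. -/
noncomputable def symT {m n : ℕ} (A : (Fin m → Fin n) → ℝ) : (Fin m → Fin n) → ℝ :=
  fun j => (∑ σ : Equiv.Perm (Fin m), A (j ∘ σ)) / (Nat.factorial m : ℝ)

/-- `A` is a Toeplitz tensor: entries are invariant under shifting all indices by one,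
whenever no index wraps around. -/
def Toeplitz {m n : ℕ} [NeZero n] (A : (Fin m → Fin n) → ℝ) : Prop :=
  ∀ j : Fin m → Fin n, (∀ l, (j l : ℕ) + 1 < n) → A j = A (fun l => j l + 1)

theorem symT_congr {m n : ℕ} {A B : (Fin m → Fin n) → ℝ} {j : Fin m → Fin n}
    (h : ∀ σ : Equiv.Perm (Fin m), A (j ∘ σ) = B (j ∘ σ)) : symT A j = symT B j := by
  simp only [symT, h]

theorem symT_comp_left {m n k : ℕ} (A : (Fin m → Fin k) → ℝ) (f : Fin n → Fin k)
    (j : Fin m → Fin n) : symT A (f ∘ j) = symT (fun i => A (f ∘ i)) j :=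
  rfl

/-- The symmetrization of a Toeplitz tensor is a Toeplitz tensor, and the symmetrization
of a circulant tensor is a circulant tensor. -/
theorem stmt_11 (m n : ℕ) [NeZero n] (A : (Fin m → Fin n) → ℝ) :
    (Toeplitz A → Toeplitz (symT A)) ∧
    ((∀ j : Fin m → Fin n, A j = A (fun l => j l + 1)) →
      ∀ j : Fin m → Fin n, symT A j = symT A (fun l => j l + 1)) := by
  refine ⟨fun hA j hj => ?_, fun hA j => ?_⟩
  · rw [show (fun l => j l + 1) = (· + 1) ∘ j from rfl, symT_comp_left]
    exact symT_congr fun σ => hA (j ∘ σ) fun l => hj (σ l)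
  · rw [show (fun l => j l + 1) = (· + 1) ∘ j from rfl, symT_comp_left]
    exact symT_congr fun σ => hA (j ∘ σ)
end

section
/- For any circulant tensor A ∈ C_{m,n}, λ_0(A) = λ_0(sym(A)); that is, the sum of all entries of the root tensor of A equals the sum of all entries of the root tensor of its symmetrization. Moreover, if m and n are both even, λ_{n/2}(A) = λ_{n/2}(sym(A)). -/
open BigOperators

/-!
A shift-invariant function on `(Fin n)^(m+1)` has the same sum over every slice `j 0 = c`, so
its total sum is `n` times its root sum (the slice `j 0 = 0`). Symmetrization preserves both
shift invariance and the total sum, hence the root sums of `A` and `sym A` agree. For the second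
claim apply this to `A` times the sign `(-1)^(Σ j)`, which is invariant under permutations of the
indices and, when `m + 1` and `n` are even, under the shift.
-/

section Symmetrization

variable {m n : ℕ}

theorem sum_symT (A : (Fin m → Fin n) → ℝ) : ∑ j, symT A j = ∑ j, A j := by
  have hsum_perm (σ : Equiv.Perm (Fin m)) : ∑ j : Fin m → Fin n, A (j ∘ σ) = ∑ j, A j :=
    Fintype.sum_equiv (σ.symm.arrowCongr (Equiv.refl _)) _ _ fun _ => rfl
  simp only [symT, ← Finset.sum_div]
  rw [Finset.sum_comm, Fintype.sum_congr _ _ hsum_perm, Finset.sum_const, Finset.card_univ,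
    Fintype.card_perm, Fintype.card_fin, nsmul_eq_mul]
  exact mul_div_cancel_left₀ _ (Nat.cast_ne_zero.2 m.factorial_ne_zero)

theorem symT_comp_of_forall_comp (A : (Fin m → Fin n) → ℝ) (φ : Fin n → Fin n)
    (hA : ∀ j, A (φ ∘ j) = A j) (j : Fin m → Fin n) : symT A (φ ∘ j) = symT A j := by
  simp only [symT, Function.comp_assoc, hA]

theorem symT_mul_of_perm_invariant (A χ : (Fin m → Fin n) → ℝ)
    (hχ : ∀ (j : Fin m → Fin n) (σ : Equiv.Perm (Fin m)), χ (j ∘ σ) = χ j) (j : Fin m → Fin n) :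
    symT (fun i => A i * χ i) j = symT A j * χ j := by
  simp only [symT, hχ, div_mul_eq_mul_div, Finset.sum_mul]

end Symmetrization

section ShiftInvariant

open Fin.NatCast

variable {β : Type*} {m n : ℕ} [NeZero n]

def ShiftInvariant (g : (Fin m → Fin n) → β) : Prop :=
  ∀ j, g j = g (fun l => j l + 1)

theorem ShiftInvariant.add_const {g : (Fin m → Fin n) → β} (hg : ShiftInvariant g)
    (j : Fin m → Fin n) (c : Fin n) : g (fun l => j l + c) = g j := by
  suffices h : ∀ k : ℕ, g (fun l => j l + k) = g j by simpa using h c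
  intro k
  induction k with
  | zero => simp
  | succ k ih => rw [← ih, hg (fun l => j l + k)]; simp only [Nat.cast_succ, add_assoc]

theorem ShiftInvariant.sum_cons_eq_sum_cons_zero [AddCommMonoid β]
    {g : (Fin (m + 1) → Fin n) → β} (hg : ShiftInvariant g) (c : Fin n) :
    ∑ t : Fin m → Fin n, g (Fin.cons c t) = ∑ t : Fin m → Fin n, g (Fin.cons 0 t) := by
  refine Fintype.sum_equiv (Equiv.piCongrRight fun _ => Equiv.subRight c) _ _ fun t => ?_
  rw [← hg.add_const _ (-c)]
  congr 1
  funext l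
  refine Fin.cases ?_ (fun i => ?_) l <;> simp [sub_eq_add_neg]

theorem ShiftInvariant.sum_eq_nsmul_sum_cons_zero [AddCommMonoid β]
    {g : (Fin (m + 1) → Fin n) → β} (hg : ShiftInvariant g) :
    ∑ j, g j = n • ∑ t : Fin m → Fin n, g (Fin.cons 0 t) := by
  rw [← (Fin.consEquiv fun _ => Fin n).sum_comp, Fintype.sum_prod_type]
  simp [Fin.consEquiv, hg.sum_cons_eq_sum_cons_zero]

theorem shiftInvariant_symT {g : (Fin m → Fin n) → ℝ} (hg : ShiftInvariant g) :
    ShiftInvariant (symT g) := fun j =>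
  (symT_comp_of_forall_comp g (· + 1) (fun i => (hg i).symm) j).symm

theorem ShiftInvariant.mul [Mul β] {g χ : (Fin m → Fin n) → β} (hg : ShiftInvariant g)
    (hχ : ShiftInvariant χ) : ShiftInvariant fun j => g j * χ j := fun j => by
  simp only [← hg j, ← hχ j]

theorem ShiftInvariant.sum_cons_zero_symT {g : (Fin (m + 1) → Fin n) → ℝ}
    (hg : ShiftInvariant g) :
    ∑ t : Fin m → Fin n, g (Fin.cons 0 t) = ∑ t : Fin m → Fin n, symT g (Fin.cons 0 t) := by
  have h := (shiftInvariant_symT hg).sum_eq_nsmul_sum_cons_zero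
  rw [sum_symT, hg.sum_eq_nsmul_sum_cons_zero] at h
  exact nsmul_right_injective (NeZero.ne n) h

end ShiftInvariant

section AlternatingSign

variable {m n : ℕ}

def alternatingSign (j : Fin m → Fin n) : ℝ := (-1) ^ ∑ l, (j l : ℕ)

theorem alternatingSign_comp_perm (j : Fin m → Fin n) (σ : Equiv.Perm (Fin m)) :
    alternatingSign (j ∘ σ) = alternatingSign j := by
  simp only [alternatingSign, Function.comp_apply]
  rw [Equiv.sum_comp σ fun l => (j l : ℕ)]

theorem alternatingSign_cons_zero [NeZero n] (t : Fin m → Fin n) :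
    alternatingSign (Fin.cons 0 t : Fin (m + 1) → Fin n) = (-1) ^ ∑ l, (t l : ℕ) := by
  simp [alternatingSign, Fin.sum_univ_succ]

theorem neg_one_pow_val_add_one [NeZero n] (hn : Even n) (x : Fin n) :
    (-1 : ℝ) ^ ((x + 1 : Fin n) : ℕ) = -(-1) ^ (x : ℕ) := by
  rw [Fin.val_add, Fin.val_one', Nat.add_mod_mod, neg_one_pow_eq_pow_mod_two,
    Nat.mod_mod_of_dvd _ (even_iff_two_dvd.1 hn), ← neg_one_pow_eq_pow_mod_two, pow_succ,
    mul_neg_one]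

theorem shiftInvariant_alternatingSign [NeZero n] (hm : Even m) (hn : Even n) :
    ShiftInvariant (alternatingSign : (Fin m → Fin n) → ℝ) := fun j => by
  simp only [alternatingSign, ← Finset.prod_pow_eq_pow_sum, neg_one_pow_val_add_one hn,
    Finset.prod_neg, Finset.card_univ, Fintype.card_fin, hm.neg_one_pow, one_mul]

end AlternatingSign

/-- For any circulant tensor `A ∈ C_{m+1,n}`, `λ₀(A) = λ₀(sym(A))`, i.e. the sum of the
entries of the root tensor of `A` equals that of its symmetrization; if moreover the order
`m+1` and `n` are even, `λ_{n/2}(A) = λ_{n/2}(sym(A))`. -/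
theorem stmt_13 (m n : ℕ) [NeZero n] (A : (Fin (m + 1) → Fin n) → ℝ)
    (hA : ∀ j : Fin (m + 1) → Fin n, A j = A (fun l => j l + 1)) :
    (∑ t : Fin m → Fin n, A (Fin.cons 0 t) = ∑ t : Fin m → Fin n, symT A (Fin.cons 0 t)) ∧
    (Even (m + 1) → Even n →
      ∑ t : Fin m → Fin n, A (Fin.cons 0 t) * (-1 : ℝ) ^ (∑ l, (t l : ℕ))
        = ∑ t : Fin m → Fin n, symT A (Fin.cons 0 t) * (-1 : ℝ) ^ (∑ l, (t l : ℕ))) := by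
  refine ⟨ShiftInvariant.sum_cons_zero_symT hA, fun hm hn => ?_⟩
  have h := (ShiftInvariant.mul hA (shiftInvariant_alternatingSign hm hn)).sum_cons_zero_symT
  simpa only [symT_mul_of_perm_invariant _ _ alternatingSign_comp_perm,
    alternatingSign_cons_zero] using h
end

section
/- An even order circulant B₀ tensor is positive semi-definite, and an even order circulant B tensor is positive definite. -/
/-!
Write `N` for the order and `μ` for the mean entry of `A`. Circulance makes every slice sum
`∑_{j : j_l = i} A_j` independent of `i`, so `∑_j (A_j - μ) x_{j_l}^N = 0` for every
position `l`, and therefore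
`A x^N = μ (∑_i x_i)^N + ∑_j (A_j - μ) (∏_l x_{j_l} - (1/N) ∑_l x_{j_l}^N)`.
The last factor vanishes on the diagonal; off the diagonal it is `≤ 0` by AM-GM (`N` even),
while a circulant B₀ tensor has `A_j ≤ μ` there, its row averages all being `μ`.
A circulant B tensor stays B₀ after subtracting a small multiple `ε` of the unit tensor,
which lowers `A x^N` by `ε ∑_i x_i^N`.
-/

open BigOperators

/-- `A` (order `m+1`) is a B₀ tensor: each row sum is nonnegative, and the average entry
of each row is at least any off-diagonal entry of that row. -/
def IsB0 {m n : ℕ} (A : (Fin (m + 1) → Fin n) → ℝ) : Prop :=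
  ∀ j : Fin n,
    0 ≤ (∑ t : Fin m → Fin n, A (Fin.cons j t)) ∧
    ∀ k : Fin m → Fin n, ¬(∀ l, k l = j) →
      A (Fin.cons j k) ≤ (∑ t : Fin m → Fin n, A (Fin.cons j t)) / (n : ℝ) ^ m

/-- `A` (order `m+1`) is a B tensor: strict versions of the B₀ inequalities. -/
def IsB {m n : ℕ} (A : (Fin (m + 1) → Fin n) → ℝ) : Prop :=
  ∀ j : Fin n,
    0 < (∑ t : Fin m → Fin n, A (Fin.cons j t)) ∧
    ∀ k : Fin m → Fin n, ¬(∀ l, k l = j) →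
      A (Fin.cons j k) < (∑ t : Fin m → Fin n, A (Fin.cons j t)) / (n : ℝ) ^ m

open Finset

theorem Real.prod_le_sum_pow_card_div_card {ι : Type*} [Fintype ι] [Nonempty ι]
    (hι : Even (Fintype.card ι)) (y : ι → ℝ) :
    ∏ l, y l ≤ (∑ l, y l ^ Fintype.card ι) / Fintype.card ι := by
  set N := Fintype.card ι
  have hN : (N : ℝ) ≠ 0 := by positivity
  have amgm := Real.geom_mean_le_arith_mean_weighted univ (fun _ => (N : ℝ)⁻¹)
    (fun l => |y l| ^ N) (fun _ _ => by positivity) (by simp [N]) (fun _ _ => by positivity)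
  calc ∏ l, y l ≤ ∏ l, |y l| := (le_abs_self _).trans (abs_prod _ _).le
    _ = ∏ l, (|y l| ^ N) ^ (N : ℝ)⁻¹ := by
      refine prod_congr rfl fun l _ => ?_
      rw [← Real.rpow_natCast, ← Real.rpow_mul (abs_nonneg _), mul_inv_cancel₀ hN,
        Real.rpow_one]
    _ ≤ ∑ l, (N : ℝ)⁻¹ * |y l| ^ N := amgm
    _ = (∑ l, y l ^ N) / N := by rw [sum_div]; simp only [hι.pow_abs, inv_mul_eq_div]

noncomputable def unitTensor (ι G : Type*) : (ι → G) → ℝ :=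
  (Set.range (Function.const ι)).indicator 1

theorem unitTensor_of_notMem {ι G : Type*} {j : ι → G}
    (hj : j ∉ Set.range (Function.const ι)) :
    unitTensor ι G j = 0 :=
  Set.indicator_of_notMem hj 1

theorem sum_unitTensor_mul {ι G : Type*} [Fintype ι] [DecidableEq ι] [Nonempty ι] [Fintype G]
    (f : (ι → G) → ℝ) :
    ∑ j, unitTensor ι G j * f j = ∑ i, f (Function.const ι i) := by
  classical
  have hrange : Set.range (Function.const ι : G → ι → G) =
      ↑(univ.image (Function.const ι : G → ι → G)) := by
    simp
  simp only [unitTensor, ← Set.indicator_mul_left, Pi.one_apply, one_mul, hrange]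
  rw [sum_indicator_subset _ (subset_univ _), sum_image fun _ _ _ _ h => Function.const_injective h]

def IsTranslationInvariant {ι G : Type*} [Add G] (A : (ι → G) → ℝ) : Prop :=
  ∀ (c : G) (j : ι → G), A (fun l => j l + c) = A j

open Fin.NatCast in
theorem isTranslationInvariant_of_add_one {ι : Type*} {n : ℕ} [NeZero n]
    {A : (ι → Fin n) → ℝ} (hA : ∀ j, A j = A (fun l => j l + 1)) :
    IsTranslationInvariant A := by
  have hnat (k : ℕ) (j : ι → Fin n) : A (fun l => j l + k) = A j := by
    induction k generalizing j with
    | zero => simp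
    | succ k ih =>
      rw [← ih j, hA fun l => j l + k]
      simp [add_assoc]
  intro c j
  simpa using hnat c j

theorem add_const_mem_range_const_iff {ι G : Type*} [AddGroup G] (j : ι → G) (c : G) :
    (fun l => j l + c) ∈ Set.range (Function.const ι) ↔
      j ∈ Set.range (Function.const ι) := by
  constructor
  · rintro ⟨i, hi⟩
    exact ⟨i - c, funext fun l => (eq_sub_of_add_eq (congrFun hi l).symm).symm⟩
  · rintro ⟨i, rfl⟩
    exact ⟨i + c, rfl⟩

theorem isTranslationInvariant_unitTensor {ι G : Type*} [AddGroup G] :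
    IsTranslationInvariant (unitTensor ι G) := fun c j => by
  classical
  simp only [unitTensor, Set.indicator_apply, Pi.one_apply, add_const_mem_range_const_iff]

section TranslationInvariant

variable {ι G : Type*} [Fintype ι] [DecidableEq ι] [AddCommGroup G] [Fintype G]

theorem IsTranslationInvariant.sum_mul_apply {A : (ι → G) → ℝ}
    (hA : IsTranslationInvariant A) (l : ι) (y : G → ℝ) :
    ∑ j, A j * y (j l) = (∑ j, A j) * (∑ i, y i) / Fintype.card G := by
  have hshift (c : G) : ∑ j, A j * y (j l + c) = ∑ j, A j * y (j l) :=
    Fintype.sum_equiv (Equiv.addRight (Function.const ι c)) _ _ fun j => by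
      change _ = A (fun l => j l + c) * _
      rw [hA]
      rfl
  rw [eq_div_iff (by positivity)]
  -- summing `hshift` over all `c` spreads `y (j l)` evenly over `G`
  calc (∑ j, A j * y (j l)) * Fintype.card G = ∑ c : G, ∑ j, A j * y (j l + c) := by
        simp [hshift, mul_comm]
    _ = ∑ j, A j * ∑ c, y (j l + c) := by rw [sum_comm]; simp only [mul_sum]
    _ = (∑ j, A j) * ∑ i, y i := by
        rw [sum_mul]
        exact sum_congr rfl fun j _ => by
          rw [Fintype.sum_equiv (Equiv.addLeft (j l)) (fun c => y (j l + c)) y fun _ => rfl]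

theorem expect_unitTensor_pos [Nonempty ι] : 0 < 𝔼 j, unitTensor ι G j :=
  expect_pos' (fun j _ => Set.indicator_nonneg (fun _ _ => zero_le_one) j)
    ⟨Function.const ι 0, mem_univ _, by simp [unitTensor]⟩

theorem sum_mul_prod_nonneg_of_le_expect [Nonempty ι] (hι : Even (Fintype.card ι))
    {A : (ι → G) → ℝ} (hA : IsTranslationInvariant A) (hmean : 0 ≤ 𝔼 j, A j)
    (hoff : ∀ j ∉ Set.range (Function.const ι), A j ≤ 𝔼 j, A j) (x : G → ℝ) :
    0 ≤ ∑ j, A j * ∏ l, x (j l) := by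
  set μ := 𝔼 j, A j with hμ
  set N := Fintype.card ι
  have hcentered : ∑ j, (A j - μ) * ((∑ l, x (j l) ^ N) / N) = 0 := by
    have hB : IsTranslationInvariant fun j => A j - μ := fun c j => by simp only [hA c j]
    have htot : ∑ j, (A j - μ) = 0 := by
      rw [sum_sub_distrib, sum_const, card_univ, nsmul_eq_mul, hμ, Fintype.card_mul_expect,
        sub_self]
    simp only [mul_div_assoc', mul_sum, sum_div]
    rw [sum_comm]
    exact sum_eq_zero fun l _ => by rw [← sum_div, hB.sum_mul_apply l (x · ^ N), htot]; simp
  have hterm (j) : (A j - μ) * ((∑ l, x (j l) ^ N) / N) ≤ (A j - μ) * ∏ l, x (j l) := by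
    by_cases hj : j ∈ Set.range (Function.const ι)
    · obtain ⟨i, rfl⟩ := hj
      simp [N]
    · exact mul_le_mul_of_nonpos_left (Real.prod_le_sum_pow_card_div_card hι _)
        (sub_nonpos.2 (hoff j hj))
  have hpow : (∑ i, x i) ^ N = ∑ j : ι → G, ∏ l, x (j l) := by
    rw [← Fintype.prod_sum fun _ i => x i, prod_const, card_univ]
  calc 0 ≤ ∑ j, (A j - μ) * ∏ l, x (j l) + μ * (∑ i, x i) ^ N :=
        add_nonneg (hcentered ▸ sum_le_sum fun j _ => hterm j)
          (mul_nonneg hmean (hι.pow_nonneg _))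
    _ = ∑ j, A j * ∏ l, x (j l) := by
      rw [hpow, mul_sum, ← sum_add_distrib]
      simp only [sub_mul, sub_add_cancel]

theorem sum_mul_prod_pos_of_lt_expect [Nonempty ι] (hι : Even (Fintype.card ι))
    {A : (ι → G) → ℝ} (hA : IsTranslationInvariant A) (hmean : 0 < 𝔼 j, A j)
    (hoff : ∀ j ∉ Set.range (Function.const ι), A j < 𝔼 j, A j) {x : G → ℝ}
    (hx : x ≠ 0) :
    0 < ∑ j, A j * ∏ l, x (j l) := by
  set μ := 𝔼 j, A j
  obtain ⟨δ, hδ, hδμ, hδoff⟩ :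
      ∃ δ > 0, δ ≤ μ ∧ ∀ j ∉ Set.range (Function.const ι), δ ≤ μ - A j := by
    let g j := μ - (Set.range (Function.const ι))ᶜ.indicator A j
    obtain ⟨j₀, hj₀⟩ := Finite.exists_min g
    refine ⟨g j₀, ?_, (hj₀ (Function.const ι 0)).trans (by simp [g]),
      fun j hj => (hj₀ j).trans (by simp [g, hj])⟩
    by_cases h : j₀ ∈ Set.range (Function.const ι)
    · simpa [g, h] using hmean
    · simpa [g, h] using hoff j₀ h
  -- subtracting `ε • unitTensor` lowers the mean by exactly the slack `δ`
  set ε := δ / 𝔼 j, unitTensor ι G j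
  have hε : 0 < ε := div_pos hδ expect_unitTensor_pos
  have hA' : IsTranslationInvariant fun j => A j - ε * unitTensor ι G j := fun c j => by
    simp only [hA c j, isTranslationInvariant_unitTensor c j]
  have hmean' : 𝔼 j, (A j - ε * unitTensor ι G j) = μ - δ := by
    rw [expect_sub_distrib, ← mul_expect, div_mul_cancel₀ _ expect_unitTensor_pos.ne']
  have hsplit : ∑ j, (A j - ε * unitTensor ι G j) * ∏ l, x (j l) =
      ∑ j, A j * ∏ l, x (j l) - ε * ∑ i, x i ^ Fintype.card ι := by
    simp only [sub_mul, sum_sub_distrib, mul_assoc, ← mul_sum, sum_unitTensor_mul]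
    simp
  have hxpos : 0 < ∑ i, x i ^ Fintype.card ι := by
    obtain ⟨i, hi⟩ := Function.ne_iff.1 hx
    exact sum_pos' (fun i _ => hι.pow_nonneg _) ⟨i, mem_univ i, hι.pow_pos hi⟩
  have hnonneg := sum_mul_prod_nonneg_of_le_expect hι hA' (by rw [hmean']; linarith)
    (fun j hj => by simp only [hmean', unitTensor_of_notMem hj]; linarith [hδoff j hj]) x
  rw [hsplit, sub_nonneg] at hnonneg
  exact (mul_pos hε hxpos).trans_le hnonneg

end TranslationInvariant

section Rows

variable {m : ℕ} {G : Type*} [AddCommGroup G] [Fintype G] {A : (Fin (m + 1) → G) → ℝ}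

theorem IsTranslationInvariant.sum_cons (hA : IsTranslationInvariant A) (i : G) :
    ∑ t : Fin m → G, A (Fin.cons i t) = (∑ j, A j) / Fintype.card G := by
  classical
  have h := hA.sum_mul_apply 0 (Pi.single i 1)
  rw [← (Fin.consEquiv fun _ => G).sum_comp, Fintype.sum_prod_type] at h
  simpa [Fin.consEquiv, Pi.single_apply] using h

theorem IsTranslationInvariant.sum_cons_div_eq_expect (hA : IsTranslationInvariant A) (i : G) :
    (∑ t : Fin m → G, A (Fin.cons i t)) / (Fintype.card G : ℝ) ^ m = 𝔼 j, A j := by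
  rw [hA.sum_cons, Fintype.expect_eq_sum_div_card, div_div, Fintype.card_fun, Fintype.card_fin]
  push_cast
  ring

end Rows

theorem Fin.not_forall_tail_eq_of_notMem_range_const {m : ℕ} {α : Type*} {j : Fin (m + 1) → α}
    (hj : j ∉ Set.range (Function.const _)) : ¬∀ l, Fin.tail j l = j 0 :=
  fun h => hj ⟨j 0, funext fun l => Fin.cases rfl (fun l => (h l).symm) l⟩

section CirculantB0

variable {m n : ℕ} [NeZero n] {A : (Fin (m + 1) → Fin n) → ℝ}

theorem IsB0.expect_nonneg (hB : IsB0 A) (hA : IsTranslationInvariant A) : 0 ≤ 𝔼 j, A j := by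
  rw [← hA.sum_cons_div_eq_expect 0, Fintype.card_fin]
  exact div_nonneg (hB 0).1 (by positivity)

theorem IsB0.le_expect (hB : IsB0 A) (hA : IsTranslationInvariant A) {j : Fin (m + 1) → Fin n}
    (hj : j ∉ Set.range (Function.const _)) : A j ≤ 𝔼 j, A j := by
  have h := (hB (j 0)).2 (Fin.tail j) (Fin.not_forall_tail_eq_of_notMem_range_const hj)
  have hrow := hA.sum_cons_div_eq_expect (j 0)
  rw [Fintype.card_fin] at hrow
  rwa [Fin.cons_self_tail, hrow] at h

theorem IsB.expect_pos (hB : IsB A) (hA : IsTranslationInvariant A) : 0 < 𝔼 j, A j := by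
  rw [← hA.sum_cons_div_eq_expect 0, Fintype.card_fin]
  exact div_pos (hB 0).1 (pow_pos (Nat.cast_pos.2 (NeZero.pos n)) m)

theorem IsB.lt_expect (hB : IsB A) (hA : IsTranslationInvariant A) {j : Fin (m + 1) → Fin n}
    (hj : j ∉ Set.range (Function.const _)) : A j < 𝔼 j, A j := by
  have h := (hB (j 0)).2 (Fin.tail j) (Fin.not_forall_tail_eq_of_notMem_range_const hj)
  have hrow := hA.sum_cons_div_eq_expect (j 0)
  rw [Fintype.card_fin] at hrow
  rwa [Fin.cons_self_tail, hrow] at h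

end CirculantB0

/-- An even order circulant B₀ tensor is positive semi-definite; an even order circulant
B tensor is positive definite. -/
theorem stmt_14 (m n : ℕ) [NeZero n] (hm : Even (m + 1))
    (A : (Fin (m + 1) → Fin n) → ℝ)
    (hA : ∀ j : Fin (m + 1) → Fin n, A j = A (fun l => j l + 1)) :
    (IsB0 A → ∀ x : Fin n → ℝ,
      0 ≤ ∑ j : Fin (m + 1) → Fin n, A j * ∏ l, x (j l)) ∧
    (IsB A → ∀ x : Fin n → ℝ, x ≠ 0 →
      0 < ∑ j : Fin (m + 1) → Fin n, A j * ∏ l, x (j l)) := by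
  have hcirc := isTranslationInvariant_of_add_one hA
  have horder : Even (Fintype.card (Fin (m + 1))) := by rwa [Fintype.card_fin]
  exact ⟨fun hB x => sum_mul_prod_nonneg_of_le_expect horder hcirc (hB.expect_nonneg hcirc)
      (fun _ => hB.le_expect hcirc) x,
    fun hB _ hx => sum_mul_prod_pos_of_lt_expect horder hcirc (hB.expect_pos hcirc)
      (fun _ => hB.lt_expect hcirc) hx⟩
end

section
/- Let m be even and A ∈ C_{m,n} a circulant tensor whose associated tensor is non-positive. Then A is positive semi-definite if and only if λ_0(A) ≥ 0, i.e., the sum of all entries of the root tensor is nonnegative. -/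
/-!
Writing every index tuple as `(0, t) + i` and using shift invariance, the form becomes
`A x^(m+1) = ∑ₜ a_t P_t(x)` with `a_t = A(0, t)` and `P_t(x) = ∑ᵢ ∏ₗ x(sₗ + i)`, `s = (0, t)`.
By AM-GM and the even degree, `P_t(x) ≤ ∑ᵢ xᵢ^(m+1) = P_0(x)`, so the non-positive weights
`a_t`, `t ≠ 0`, give `A x^(m+1) ≥ λ₀ · ∑ᵢ xᵢ^(m+1)`. Conversely `A 1^(m+1) = n λ₀`.
-/

open Finset

lemma prod_abs_le_sum_abs_pow_div {d : ℕ} (hd : 0 < d) (y : Fin d → ℝ) :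
    ∏ l, |y l| ≤ (∑ l, |y l| ^ d) / d := by
  have hd' : (d : ℝ) ≠ 0 := by positivity
  calc ∏ l, |y l| = ∏ l : Fin d, (|y l| ^ d) ^ (1 / (d : ℝ)) := by
        refine prod_congr rfl fun l _ => ?_
        rw [← Real.rpow_natCast, ← Real.rpow_mul (abs_nonneg _), mul_one_div_cancel hd',
          Real.rpow_one]
    _ ≤ ∑ l : Fin d, 1 / (d : ℝ) * |y l| ^ d :=
        Real.geom_mean_le_arith_mean_weighted _ _ _ (fun _ _ => by positivity)
          (by simp [hd']) (fun _ _ => by positivity)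
    _ = (∑ l, |y l| ^ d) / d := by rw [← mul_sum, one_div_mul_eq_div]

lemma apply_add_nsmul_eq_of_apply_add_eq {ι G β : Type*} [AddMonoid G] {f : (ι → G) → β} {g : G}
    (hf : ∀ j, f j = f (fun l => j l + g)) (k : ℕ) (j : ι → G) :
    f (fun l => j l + k • g) = f j := by
  induction k generalizing j with
  | zero => simp only [zero_nsmul, add_zero]
  | succ k ih =>
    simp only [succ_nsmul, ← add_assoc]
    exact (hf fun l => j l + k • g).symm.trans (ih j)

open Fin.NatCast in
lemma Fin.apply_add_eq_of_apply_add_one_eq {ι β : Type*} {n : ℕ} [NeZero n]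
    {f : (ι → Fin n) → β} (hf : ∀ j, f j = f (fun l => j l + 1)) (c : Fin n) (j : ι → Fin n) :
    f (fun l => j l + c) = f j := by
  simpa [nsmul_one, Fin.cast_val_eq_self] using apply_add_nsmul_eq_of_apply_add_eq hf c.val j

def Fin.consZeroAddEquiv (G : Type*) [AddGroup G] (m : ℕ) :
    (Fin m → G) × G ≃ (Fin (m + 1) → G) where
  toFun p l := (Fin.cons 0 p.1 : Fin (m + 1) → G) l + p.2
  invFun j := (fun l => j l.succ - j 0, j 0)
  left_inv := by rintro ⟨t, i⟩; ext <;> simp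
  right_inv j := by ext l; refine Fin.cases ?_ (fun _ => ?_) l <;> simp

lemma Fin.sum_eq_sum_sum_cons_zero_add {G M : Type*} [AddGroup G] [Fintype G] [AddCommMonoid M]
    {m : ℕ} (f : (Fin (m + 1) → G) → M) :
    ∑ j, f j = ∑ t : Fin m → G, ∑ i, f (fun l => (Fin.cons 0 t : Fin (m + 1) → G) l + i) :=
  ((Fin.consZeroAddEquiv G m).sum_comp f).symm.trans (Fintype.sum_prod_type _)

lemma sum_mul_le_sum_mul_of_nonpos {ι : Type*} [Fintype ι] (w p : ι → ℝ) (t₀ : ι)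
    (hw : ∀ t, t ≠ t₀ → w t ≤ 0) (hp : ∀ t, p t ≤ p t₀) :
    (∑ t, w t) * p t₀ ≤ ∑ t, w t * p t := by
  rw [sum_mul]
  refine sum_le_sum fun t _ => ?_
  rcases eq_or_ne t t₀ with rfl | ht
  · rfl
  · exact mul_le_mul_of_nonpos_left (hp t) (hw t ht)

section ShiftProdSum

variable {G : Type*} [AddCommGroup G] [Fintype G] {d : ℕ}

def shiftProdSum (s : Fin d → G) (x : G → ℝ) : ℝ := ∑ i, ∏ l, x (s l + i)

lemma shiftProdSum_zero (x : G → ℝ) : shiftProdSum (0 : Fin d → G) x = ∑ i, x i ^ d := by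
  simp [shiftProdSum]

lemma shiftProdSum_le (s : Fin d → G) (x : G → ℝ) : shiftProdSum s x ≤ ∑ i, |x i| ^ d := by
  rcases Nat.eq_zero_or_pos d with rfl | hd
  · simp [shiftProdSum]
  calc shiftProdSum s x ≤ ∑ i, ∏ l, |x (s l + i)| :=
        sum_le_sum fun i _ => (le_abs_self _).trans (abs_prod _ _).le
    _ ≤ ∑ i, (∑ l, |x (s l + i)| ^ d) / d :=
        sum_le_sum fun i _ => prod_abs_le_sum_abs_pow_div hd _
    _ = ∑ i, |x i| ^ d := by
        rw [← sum_div, sum_comm]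
        simp_rw [fun l => Fintype.sum_equiv (Equiv.addLeft (s l)) (fun i => |x (s l + i)| ^ d)
          (fun i => |x i| ^ d) (fun _ => rfl)]
        simp [hd.ne']

lemma shiftProdSum_le_shiftProdSum_zero (hd : Even d) (s : Fin d → G) (x : G → ℝ) :
    shiftProdSum s x ≤ shiftProdSum (0 : Fin d → G) x := by
  simpa [shiftProdSum_zero, hd.pow_abs] using shiftProdSum_le s x

lemma sum_mul_prod_eq_sum_mul_shiftProdSum {m : ℕ} (A : (Fin (m + 1) → G) → ℝ)
    (hA : ∀ c j, A (fun l => j l + c) = A j) (x : G → ℝ) :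
    ∑ j, A j * ∏ l, x (j l) =
      ∑ t : Fin m → G, A (Fin.cons 0 t) * shiftProdSum (Fin.cons 0 t) x := by
  rw [Fin.sum_eq_sum_sum_cons_zero_add]
  simp only [hA, shiftProdSum, mul_sum]

end ShiftProdSum

/-- Let the order `m+1` be even and `A ∈ C_{m+1,n}` a circulant tensor whose associated
tensor is non-positive. Then `A` is positive semi-definite iff `λ₀(A) ≥ 0`, i.e. the sum
of all entries of the root tensor is nonnegative. -/
theorem stmt_15 (m n : ℕ) [NeZero n] (hm : Even (m + 1))
    (A : (Fin (m + 1) → Fin n) → ℝ)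
    (hA : ∀ j : Fin (m + 1) → Fin n, A j = A (fun l => j l + 1))
    (hassoc : ∀ t : Fin m → Fin n, t ≠ (fun _ => 0) → A (Fin.cons 0 t) ≤ 0) :
    (∀ x : Fin n → ℝ, 0 ≤ ∑ j : Fin (m + 1) → Fin n, A j * ∏ l, x (j l)) ↔
      0 ≤ ∑ t : Fin m → Fin n, A (Fin.cons 0 t) := by
  simp only [sum_mul_prod_eq_sum_mul_shiftProdSum A (Fin.apply_add_eq_of_apply_add_one_eq hA)]
  constructor
  · intro hpsd
    have h := hpsd 1
    simp only [shiftProdSum, Pi.one_apply, prod_const_one, sum_const, card_univ, Fintype.card_fin,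
      nsmul_one, ← sum_mul] at h
    exact (mul_nonneg_iff_of_pos_right (Nat.cast_pos.mpr (NeZero.pos n))).mp h
  · intro hlam x
    have h0 : (Fin.cons 0 (fun _ => 0) : Fin (m + 1) → Fin n) = 0 := Matrix.cons_zero_zero
    calc (0 : ℝ) ≤ (∑ t, A (Fin.cons 0 t)) * shiftProdSum (Fin.cons 0 (fun _ => 0)) x := by
          rw [h0, shiftProdSum_zero]
          exact mul_nonneg hlam (sum_nonneg fun i _ => hm.pow_nonneg _)
      _ ≤ _ := sum_mul_le_sum_mul_of_nonpos _ _ _ hassoc fun t =>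
          h0 ▸ shiftProdSum_le_shiftProdSum_zero hm _ x
end
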